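/- arXiv:1601.04629 — 7 statements merged into one kernel-verified Lean document; each statement's English description precedes it below -/
import Mathlib

section
/- Let n be a natural number and let c : ℕ → ℤ satisfy c i = -c (2n+1-i) for all 0 ≤ i ≤ 2n+1 and c i = 0 for i > 2n+1. Let χ_y = ∑_{i=0}^{2n+1} c i · y^i (a polynomial in ℤ[y]), τ = c 0, and e = χ_y evaluated at y = -1. Then 2·χ_y = 2τ·(1 + (-1)^{n+1} y^n)·(1 - (-1)^{n+1} y^{n+1}) + (-1)^n · e · y^n · (1 - y) + ∑_{i=1}^{n-1} 2·(c i)·y^i·(1 - (-1)^{n-i} y^{n-i})·(1 + (-1)^{n-i} y^{n-i+1}) as polynomials in ℤ[y]. -/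
open Polynomial Finset

lemma negpow_congr {a b : ℕ} (h : a % 2 = b % 2) : ((-1:ℤ))^a = (-1)^b := by
  rcases Nat.even_or_odd a with ha | ha
  · have hb : Even b := by rw [Nat.even_iff] at *; omega
    rw [ha.neg_one_pow, hb.neg_one_pow]
  · have hb : Odd b := by rw [Nat.odd_iff] at *; omega
    rw [ha.neg_one_pow, hb.neg_one_pow]

lemma split3 (n : ℕ) (hn : 1 ≤ n) {M : Type*} [AddCommMonoid M] (f : ℕ → M) :
    ∑ i ∈ range (n+1), f i = f 0 + (∑ i ∈ Finset.Icc 1 (n-1), f i) + f n := by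
  have h1 : Finset.Icc 1 (n-1) = Finset.Ico 1 n := by
    rw [← Finset.Ico_add_one_right_eq_Icc]; congr 1; omega
  have h2 : ∑ i ∈ range n, f i = f 0 + ∑ i ∈ range (n - 1), f (1 + i) := by
    obtain ⟨m, rfl⟩ : ∃ m, n = m + 1 := ⟨n-1, by omega⟩
    rw [Finset.sum_range_succ']
    simp [add_comm]
  rw [Finset.sum_range_succ, h1, Finset.sum_Ico_eq_sum_range, h2]

theorem chi_y_formula_odd_dim (n : ℕ) (c : ℕ → ℤ)
    (hdual : ∀ i ≤ 2 * n + 1, c i = -c (2 * n + 1 - i))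
    (hzero : ∀ i > 2 * n + 1, c i = 0) :
    2 * (∑ i ∈ range (2 * n + 2), C (c i) * X ^ i) =
      C (2 * c 0) * (1 + C ((-1) ^ (n + 1)) * X ^ n) * (1 - C ((-1) ^ (n + 1)) * X ^ (n + 1)) +
      C ((-1) ^ n * (∑ i ∈ range (2 * n + 2), C (c i) * X ^ i).eval (-1)) * X ^ n * (1 - X) +
      ∑ i ∈ Finset.Icc 1 (n - 1),
        C (2 * c i) * X ^ i * (1 - C ((-1) ^ (n - i)) * X ^ (n - i)) *
          (1 + C ((-1) ^ (n - i)) * X ^ (n - i + 1)) := by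
  -- Step 1: fold the sum using duality
  have h1 : (∑ i ∈ range (2*n+2), C (c i) * X ^ i)
      = ∑ i ∈ range (n+1), (C (c i) * X ^ i - C (c i) * X ^ (2*n+1-i)) := by
    rw [show 2*n+2 = (n+1)+(n+1) by ring, Finset.sum_range_add]
    have h2 : ∑ j ∈ range (n+1), C (c (n+1+j)) * X ^ (n+1+j)
        = ∑ j ∈ range (n+1), -(C (c j) * X ^ (2*n+1-j)) := by
      rw [← Finset.sum_range_reflect (fun j => -(C (c j) * X ^ (2*n+1-j))) (n+1)]
      refine Finset.sum_congr rfl fun j hj => ?_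
      simp only [mem_range] at hj
      have hj' : j ≤ n := Nat.lt_succ_iff.mp hj
      rw [show n+1-1-j = n - j by omega]
      have e2 : c (n+1+j) = -c (n-j) := by
        rw [hdual (n+1+j) (by omega)]; congr 2; omega
      rw [e2, show 2*n+1-(n-j) = n+1+j by omega, map_neg, neg_mul]
    rw [h2, Finset.sum_neg_distrib, ← sub_eq_add_neg, ← Finset.sum_sub_distrib]
  -- Step 2: evaluate at -1
  have he : ((∑ i ∈ range (2*n+2), C (c i) * X ^ i).eval (-1))
      = 2 * ∑ i ∈ range (n+1), c i * (-1:ℤ)^i := by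
    rw [h1, eval_finset_sum]
    simp only [eval_sub, eval_mul, eval_C, eval_pow, eval_X]
    rw [Finset.mul_sum]
    refine Finset.sum_congr rfl fun i hi => ?_
    simp only [mem_range] at hi
    have hneg : ((-1:ℤ))^(2*n+1-i) = -(-1:ℤ)^i := by
      rw [show -(-1:ℤ)^i = (-1)^(i+1) by rw [pow_succ]; ring]
      exact negpow_congr (by omega)
    rw [hneg]; ring
  rw [he, h1]
  rcases Nat.lt_or_ge n 1 with hn | hn
  · -- n = 0
    interval_cases n
    simp only [Finset.Icc_self, Nat.zero_sub]
    norm_num [Finset.sum_range_succ]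
    ring
  · -- n ≥ 1
    -- expand the Icc sum termwise
    have hicc : ∀ i ∈ Finset.Icc 1 (n-1),
        C (2 * c i) * X ^ i * (1 - C ((-1:ℤ) ^ (n - i)) * X ^ (n - i)) *
          (1 + C ((-1:ℤ) ^ (n - i)) * X ^ (n - i + 1))
        = 2*(C (c i) * X ^ i - C (c i) * X ^ (2*n+1-i))
          - C (2 * c i * (-1:ℤ)^(n-i)) * (X^n - X^(n+1)) := by
      intro i hi
      simp only [mem_Icc] at hi
      obtain ⟨hi1, hi2⟩ := hi
      have hin : i ≤ n - 1 := hi2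
      set j := n - i with hj
      have hXn : (X:ℤ[X])^n = X^i * X^j := by
        rw [← pow_add]; congr 1; omega
      have hXn1 : (X:ℤ[X])^(n+1) = X^i * X^j * X := by
        rw [← pow_add, ← pow_succ]; congr 1; omega
      have hX2n : (X:ℤ[X])^(2*n+1-i) = X^i * X^j * X^j * X := by
        rw [← pow_add, ← pow_add, ← pow_succ]; congr 1; omega
      have hXj1 : (X:ℤ[X])^(j+1) = X^j * X := pow_succ X j
      rw [hXn, hXn1, hX2n, hXj1]
      rcases Nat.even_or_odd j with hpar | hpar
      · rw [hpar.neg_one_pow]; simp only [map_one, map_mul, map_ofNat, mul_one]; ring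
      · rw [hpar.neg_one_pow]
        simp only [map_neg, map_one, map_mul, map_ofNat]; ring
    have hIccSum : (∑ i ∈ Finset.Icc 1 (n-1),
        C (2 * c i) * X ^ i * (1 - C ((-1:ℤ) ^ (n - i)) * X ^ (n - i)) *
          (1 + C ((-1:ℤ) ^ (n - i)) * X ^ (n - i + 1)))
        = 2 * (∑ i ∈ Finset.Icc 1 (n-1), (C (c i) * X ^ i - C (c i) * X ^ (2*n+1-i)))
          - C (∑ i ∈ Finset.Icc 1 (n-1), (2 * c i * (-1:ℤ)^(n-i))) * (X^n - X^(n+1)) := by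
      rw [Finset.mul_sum, map_sum, Finset.sum_mul, ← Finset.sum_sub_distrib]
      exact Finset.sum_congr rfl hicc
    rw [hIccSum]
    -- split main sum
    rw [split3 n hn (M := Polynomial ℤ) (fun i => C (c i) * X ^ i - C (c i) * X ^ (2*n+1-i))]
    -- arithmetic identity in ℤ
    have harith : (2:ℤ[X]) * C (c n) = C (2 * c 0 * (-1:ℤ)^(n+1))
        + C ((-1:ℤ)^n * (2 * ∑ i ∈ range (n+1), c i * (-1:ℤ)^i))
        - C (∑ i ∈ Finset.Icc 1 (n-1), (2 * c i * (-1:ℤ)^(n-i))) := by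
      rw [show (2:ℤ[X]) * C (c n) = C (2 * c n) by rw [map_mul, map_ofNat], ← map_add, ← map_sub]
      congr 1
      have hpull : (-1:ℤ)^n * (2 * ∑ i ∈ range (n+1), c i * (-1:ℤ)^i)
          = 2 * ∑ i ∈ range (n+1), c i * (-1:ℤ)^(n-i) := by
        rw [mul_left_comm]
        congr 1
        rw [Finset.mul_sum]
        refine Finset.sum_congr rfl fun i hi => ?_
        simp only [mem_range] at hi
        rw [mul_left_comm, ← pow_add, negpow_congr (a := n+i) (b := n-i) (by omega)]
      rw [hpull, split3 n hn (fun i => c i * (-1:ℤ)^(n-i)),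
        show (∑ i ∈ Finset.Icc 1 (n-1), (2 * c i * (-1:ℤ)^(n-i)))
          = 2 * ∑ i ∈ Finset.Icc 1 (n-1), c i * (-1:ℤ)^(n-i) from by
            rw [Finset.mul_sum]; exact Finset.sum_congr rfl fun i _ => by ring]
      simp only [Nat.sub_zero, Nat.sub_self, pow_zero, mul_one, pow_succ]
      ring
    -- final assembly
    have hτ : C (2 * c 0) * (1 + C ((-1:ℤ) ^ (n + 1)) * X ^ n) * (1 - C ((-1:ℤ) ^ (n + 1)) * X ^ (n + 1))
        = 2*(C (c 0) * X ^ 0 - C (c 0) * X ^ (2*n+1-0))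
          + C (2 * c 0 * (-1:ℤ)^(n+1)) * (X^n - X^(n+1)) := by
      have hX2n : (X:ℤ[X])^(2*n+1-0) = X^n * X^(n+1) := by
        rw [← pow_add]; congr 1; omega
      rw [hX2n]
      rcases Nat.even_or_odd (n+1) with hpar | hpar
      · rw [hpar.neg_one_pow]; simp only [map_one, map_mul, map_ofNat]; ring
      · rw [hpar.neg_one_pow]; simp only [map_neg, map_one, map_mul, map_ofNat]; ring
    rw [hτ]
    have heterm : C ((-1:ℤ)^n * (2 * ∑ i ∈ range (n+1), c i * (-1:ℤ)^i)) * X ^ n * (1 - X)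
        = C ((-1:ℤ)^n * (2 * ∑ i ∈ range (n+1), c i * (-1:ℤ)^i)) * (X^n - X^(n+1)) := by
      rw [pow_succ]; ring
    rw [heterm]
    have hfn : C (c n) * X ^ n - C (c n) * X ^ (2*n+1-n)
        = C (c n) * (X^n - X^(n+1)) := by
      rw [show 2*n+1-n = n+1 by omega]; ring
    rw [hfn]
    linear_combination (harith) * (X^n - X^(n+1) : ℤ[X])
end

section
/- Let a, b : ℕ → ℤ satisfy the duality relations a i = -a (3-i) for 0 ≤ i ≤ 3 (with a i = 0 for i > 3) and b i = -b (3-i) for 0 ≤ i ≤ 3 (with b i = 0 for i > 3), and suppose ∑_{i=0}^{3}(-1)^i a i = ∑_{i=0}^{3}(-1)^i b i (equal Euler characteristics). Let A(y) = ∑ a i y^i and B(y) = ∑ b i y^i. Then A(y) - B(y) = (a 0 - b 0)·(1+y)^2·(1-y) as polynomials in ℤ[y]. In particular, A = B if and only if a 0 = b 0. -/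
open Polynomial Finset

theorem chi_y_diff_dim3 (a b : ℕ → ℤ)
    (hduala : ∀ i ≤ 3, a i = -a (3 - i)) (hzeroa : ∀ i > 3, a i = 0)
    (hdualb : ∀ i ≤ 3, b i = -b (3 - i)) (hzerob : ∀ i > 3, b i = 0)
    (heuler : ∑ i ∈ range 4, (-1) ^ i * a i = ∑ i ∈ range 4, (-1) ^ i * b i) :
    (∑ i ∈ range 4, C (a i) * X ^ i) - (∑ i ∈ range 4, C (b i) * X ^ i) =
        C (a 0 - b 0) * (1 + X) ^ 2 * (1 - X) ∧
      ((∑ i ∈ range 4, C (a i) * X ^ i) = (∑ i ∈ range 4, C (b i) * X ^ i) ↔ a 0 = b 0) := by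
  have ha0 : a 0 = -a 3 := hduala 0 (by norm_num)
  have ha1 : a 1 = -a 2 := hduala 1 (by norm_num)
  have hb0 : b 0 = -b 3 := hdualb 0 (by norm_num)
  have hb1 : b 1 = -b 2 := hdualb 1 (by norm_num)
  simp only [sum_range_succ, sum_range_zero] at heuler ⊢
  have h1 : a 1 - b 1 = a 0 - b 0 := by
    rw [ha0, ha1, hb0, hb1] at heuler; push_cast at heuler; linarith
  have h2 : a 2 - b 2 = -(a 0 - b 0) := by
    have := ha1; have := hb1; linarith
  have h3 : a 3 - b 3 = -(a 0 - b 0) := by linarith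
  have ea1 : a 1 = (a 0 - b 0) + b 1 := by linarith
  have ea2 : a 2 = -(a 0 - b 0) + b 2 := by linarith
  have ea3 : a 3 = -(a 0 - b 0) + b 3 := by linarith
  constructor
  · rw [ea1, ea2, ea3]
    have ea0 : a 0 = (a 0 - b 0) + b 0 := by ring
    rw [ea0]
    simp only [map_add, map_neg, map_sub]
    ring
  · constructor
    · intro h
      have := congrArg (fun p => p.coeff 0) h
      simpa using this
    · intro h
      rw [ea1, ea2, ea3, h]
      simp
end

section
/- Let k ≥ 1 and let c : ℕ → ℤ satisfy c i = c (4k - i) for 0 ≤ i ≤ 4k and c i = 0 for i > 4k. Let χ_y = ∑_{i=0}^{4k}(c i)y^i, τ = c 0, σ = ∑_{i=0}^{4k} c i, and e = ∑_{i=0}^{4k}(-1)^i c i. Then 4·χ_y = 4τ·(1 - y^{2k})^2 + σ·y^{2k-1}·(1+y)^2 - e·y^{2k-1}·(1-y)^2 + ∑_{j=1}^{k-1} 4·(c (2j))·y^{2j}·(1 - y^{2k-2j})^2 + ∑_{j=1}^{k-1} 4·(c (2j-1))·y^{2j-1}·(1 - y^{2k-2j})·(1 - y^{2k-2j+2}) as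 polynomials in ℤ[y]. -/
open Polynomial Finset

private lemma sum_even_odd {M : Type*} [AddCommMonoid M] (n : ℕ) (f : ℕ → M) :
    ∑ i ∈ range (2 * n + 1), f i =
      (∑ j ∈ range (n + 1), f (2 * j)) + ∑ j ∈ range n, f (2 * j + 1) := by
  induction n with
  | zero => simp
  | succ n ih =>
    rw [show 2 * (n + 1) + 1 = (2 * n + 1) + 1 + 1 by ring, sum_range_succ, sum_range_succ, ih,
      sum_range_succ (fun j => f (2 * j)) (n + 1), sum_range_succ (fun j => f (2 * j + 1)) n,
      show 2 * (n + 1) = 2 * n + 1 + 1 by ring]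
    abel

private lemma fold_odd_len {M : Type*} [AddCommMonoid M] (n : ℕ) (a : ℕ → M) :
    ∑ j ∈ range (2 * n + 1), a j =
      (∑ j ∈ range n, (a j + a (2 * n - j))) + a n := by
  rw [show 2 * n + 1 = n + (n + 1) by ring, Finset.sum_range_add, sum_range_succ',
    ← Finset.sum_range_reflect (fun i => a (n + (i + 1))) n, sum_add_distrib]
  have : ∀ j ∈ range n, a (n + (n - 1 - j + 1)) = a (2 * n - j) := by
    intro j hj; rw [mem_range] at hj; congr 1; omega
  rw [Finset.sum_congr rfl this]
  abel

private lemma fold_even_len {M : Type*} [AddCommMonoid M] (n : ℕ) (a : ℕ → M) :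
    ∑ j ∈ range (2 * n), a j = ∑ j ∈ range n, (a j + a (2 * n - 1 - j)) := by
  rw [two_mul, Finset.sum_range_add, ← Finset.sum_range_reflect (fun i => a (n + i)) n,
    sum_add_distrib]
  congr 1
  refine Finset.sum_congr rfl fun j hj => ?_
  rw [mem_range] at hj; congr 1; omega

private lemma decomp {M : Type*} [AddCommMonoid M] (n : ℕ) (f : ℕ → M) :
    ∑ i ∈ range (4 * n + 1), f i =
      ((∑ j ∈ range n, (f (2 * j) + f (4 * n - 2 * j))) + f (2 * n)) +
        ∑ j ∈ range n, (f (2 * j + 1) + f (4 * n - 2 * j - 1)) := by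
  rw [show 4 * n + 1 = 2 * (2 * n) + 1 by ring, sum_even_odd,
    fold_odd_len n (fun j => f (2 * j)), fold_even_len n (fun j => f (2 * j + 1))]
  congr 1
  · congr 1
    refine Finset.sum_congr rfl fun j hj => ?_
    rw [mem_range] at hj
    congr 2
    omega
  · refine Finset.sum_congr rfl fun j hj => ?_
    rw [mem_range] at hj
    congr 2
    omega

private lemma icc_to_range {M : Type*} [AddCommMonoid M] (m : ℕ) (g : ℕ → M) :
    ∑ j ∈ Finset.Icc 1 m, g j = ∑ i ∈ range m, g (i + 1) := by
  induction m with
  | zero => simp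
  | succ m ih => rw [Finset.sum_Icc_succ_top (by omega), ih, sum_range_succ]

private lemma decomp' {M : Type*} [AddCommMonoid M] (m : ℕ) (f : ℕ → M) :
    ∑ i ∈ range (4 * (m + 1) + 1), f i =
      (∑ i ∈ range m,
          ((f (2 * i + 2) + f (4 * m + 2 - 2 * i)) + (f (2 * i + 1) + f (4 * m + 3 - 2 * i)))) +
        ((f 0 + f (4 * m + 4)) + f (2 * m + 2) + (f (2 * m + 1) + f (2 * m + 3))) := by
  rw [decomp (m + 1) f, sum_range_succ' (fun j => f (2 * j) + f (4 * (m + 1) - 2 * j)) m,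
    sum_range_succ (fun j => f (2 * j + 1) + f (4 * (m + 1) - 2 * j - 1)) m,]
  have h1 : ∀ i ∈ range m,
      (f (2 * (i + 1)) + f (4 * (m + 1) - 2 * (i + 1))) =
      (f (2 * i + 2) + f (4 * m + 2 - 2 * i)) := by
    intro i hi
    rw [mem_range] at hi
    rw [show 2 * (i + 1) = 2 * i + 2 by omega,
      show 4 * (m + 1) - (2 * i + 2) = 4 * m + 2 - 2 * i by omega]
  have h2 : ∀ i ∈ range m,
      (f (2 * i + 1) + f (4 * (m + 1) - 2 * i - 1)) =
      (f (2 * i + 1) + f (4 * m + 3 - 2 * i)) := by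
    intro i hi
    rw [mem_range] at hi
    rw [show 4 * (m + 1) - 2 * i - 1 = 4 * m + 3 - 2 * i by omega]
  rw [Finset.sum_congr rfl h1, Finset.sum_congr rfl h2,
    show 2 * 0 = 0 by omega, show 4 * (m + 1) - 0 = 4 * m + 4 by omega,
    show 2 * (m + 1) = 2 * m + 2 by omega,
    show 4 * (m + 1) - 2 * m - 1 = 2 * m + 3 by omega]
  simp only [Finset.sum_add_distrib]
  abel
theorem chi_y_formula_dim_4k (k : ℕ) (hk : 1 ≤ k) (c : ℕ → ℤ)
    (hdual : ∀ i ≤ 4 * k, c i = c (4 * k - i)) (hzero : ∀ i > 4 * k, c i = 0) :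
    4 * (∑ i ∈ range (4 * k + 1), C (c i) * X ^ i) =
      C (4 * c 0) * (1 - X ^ (2 * k)) ^ 2 +
      C (∑ i ∈ range (4 * k + 1), c i) * X ^ (2 * k - 1) * (1 + X) ^ 2 -
      C (∑ i ∈ range (4 * k + 1), (-1) ^ i * c i) * X ^ (2 * k - 1) * (1 - X) ^ 2 +
      (∑ j ∈ Finset.Icc 1 (k - 1),
        C (4 * c (2 * j)) * X ^ (2 * j) * (1 - X ^ (2 * k - 2 * j)) ^ 2) +
      (∑ j ∈ Finset.Icc 1 (k - 1),
        C (4 * c (2 * j - 1)) * X ^ (2 * j - 1) * (1 - X ^ (2 * k - 2 * j)) *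
          (1 - X ^ (2 * k - 2 * j + 2))) := by
  obtain ⟨m, rfl⟩ : ∃ m, k = m + 1 := ⟨k - 1, by omega⟩
  clear hk hzero
  have hdual2 : ∀ i, i < m → c (4 * m + 2 - 2 * i) = c (2 * i + 2) := by
    intro i hi
    rw [show 4 * m + 2 - 2 * i = 4 * (m + 1) - (2 * i + 2) by omega]
    exact (hdual (2 * i + 2) (by omega)).symm
  have hdual1 : ∀ i, i < m → c (4 * m + 3 - 2 * i) = c (2 * i + 1) := by
    intro i hi
    rw [show 4 * m + 3 - 2 * i = 4 * (m + 1) - (2 * i + 1) by omega]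
    exact (hdual (2 * i + 1) (by omega)).symm
  have h0 : c (4 * m + 4) = c 0 := by
    rw [show 4 * m + 4 = 4 * (m + 1) - 0 by omega]
    exact (hdual 0 (by omega)).symm
  have h1 : c (2 * m + 3) = c (2 * m + 1) := by
    rw [show 2 * m + 3 = 4 * (m + 1) - (2 * m + 1) by omega]
    exact (hdual (2 * m + 1) (by omega)).symm
  -- sigma
  have hσ : ∑ i ∈ range (4 * (m + 1) + 1), c i
      = (∑ i ∈ range m, (2 * c (2 * i + 2) + 2 * c (2 * i + 1)))
        + (2 * c 0 + c (2 * m + 2) + 2 * c (2 * m + 1)) := by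
    rw [decomp' m c, h0, h1]
    have hterm : ∀ i ∈ range m,
        (c (2 * i + 2) + c (4 * m + 2 - 2 * i)) + (c (2 * i + 1) + c (4 * m + 3 - 2 * i))
          = 2 * c (2 * i + 2) + 2 * c (2 * i + 1) := by
      intro i hi
      rw [mem_range] at hi
      rw [hdual2 i hi, hdual1 i hi]; ring
    rw [Finset.sum_congr rfl hterm]; ring
  -- e
  have he : ∑ i ∈ range (4 * (m + 1) + 1), (-1) ^ i * c i
      = (∑ i ∈ range m, (2 * c (2 * i + 2) - 2 * c (2 * i + 1)))
        + (2 * c 0 + c (2 * m + 2) - 2 * c (2 * m + 1)) := by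
    rw [decomp' m (fun i => (-1) ^ i * c i)]
    have hterm : ∀ i ∈ range m,
        ((-1) ^ (2 * i + 2) * c (2 * i + 2) + (-1) ^ (4 * m + 2 - 2 * i) * c (4 * m + 2 - 2 * i))
          + ((-1) ^ (2 * i + 1) * c (2 * i + 1) + (-1) ^ (4 * m + 3 - 2 * i) * c (4 * m + 3 - 2 * i))
          = 2 * c (2 * i + 2) - 2 * c (2 * i + 1) := by
      intro i hi
      rw [mem_range] at hi
      rw [hdual2 i hi, hdual1 i hi,
        (show ((-1 : ℤ)) ^ (2 * i + 2) = 1 from Even.neg_one_pow ⟨i + 1, by omega⟩),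
        (show ((-1 : ℤ)) ^ (4 * m + 2 - 2 * i) = 1 from Even.neg_one_pow ⟨2 * m + 1 - i, by omega⟩),
        (show ((-1 : ℤ)) ^ (2 * i + 1) = -1 from Odd.neg_one_pow ⟨i, by omega⟩),
        (show ((-1 : ℤ)) ^ (4 * m + 3 - 2 * i) = -1 from Odd.neg_one_pow ⟨2 * m + 1 - i, by omega⟩)]
      ring
    rw [Finset.sum_congr rfl hterm,
      (show ((-1 : ℤ)) ^ (4 * m + 4) = 1 from Even.neg_one_pow ⟨2 * m + 2, by omega⟩),
      (show ((-1 : ℤ)) ^ (2 * m + 2) = 1 from Even.neg_one_pow ⟨m + 1, by omega⟩),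
      (show ((-1 : ℤ)) ^ (2 * m + 1) = -1 from Odd.neg_one_pow ⟨m, by omega⟩),
      (show ((-1 : ℤ)) ^ (2 * m + 3) = -1 from Odd.neg_one_pow ⟨m + 1, by omega⟩),
      (show ((-1 : ℤ)) ^ 0 = 1 from pow_zero _), h0, h1]
    ring
  -- LHS
  have hL : ∑ i ∈ range (4 * (m + 1) + 1), C (c i) * X ^ i
      = (∑ i ∈ range m,
          (C (c (2 * i + 2)) * (X ^ (2 * i + 2) + X ^ (4 * m + 2 - 2 * i)) +
            C (c (2 * i + 1)) * (X ^ (2 * i + 1) + X ^ (4 * m + 3 - 2 * i))))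
        + (C (c 0) * (1 + X ^ (4 * m + 4)) + C (c (2 * m + 2)) * X ^ (2 * m + 2) +
            C (c (2 * m + 1)) * (X ^ (2 * m + 1) + X ^ (2 * m + 3))) := by
    rw [decomp' m (fun i => C (c i) * X ^ i)]
    have hterm : ∀ i ∈ range m,
        (C (c (2 * i + 2)) * X ^ (2 * i + 2) + C (c (4 * m + 2 - 2 * i)) * X ^ (4 * m + 2 - 2 * i))
          + (C (c (2 * i + 1)) * X ^ (2 * i + 1) +
              C (c (4 * m + 3 - 2 * i)) * X ^ (4 * m + 3 - 2 * i))
          = C (c (2 * i + 2)) * (X ^ (2 * i + 2) + X ^ (4 * m + 2 - 2 * i)) +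
            C (c (2 * i + 1)) * (X ^ (2 * i + 1) + X ^ (4 * m + 3 - 2 * i)) := by
      intro i hi
      rw [mem_range] at hi
      rw [hdual2 i hi, hdual1 i hi]; ring
    rw [Finset.sum_congr rfl hterm, h0, h1]
    ring
  rw [hL, hσ, he, Nat.add_sub_cancel, icc_to_range, icc_to_range,
    show 2 * (m + 1) - 1 = 2 * m + 1 by omega]
  have hR : (C (4 * c 0) * (1 - X ^ (2 * (m + 1))) ^ 2 +
        C (∑ i ∈ range m, (2 * c (2 * i + 2) + 2 * c (2 * i + 1)) +
            (2 * c 0 + c (2 * m + 2) + 2 * c (2 * m + 1))) * X ^ (2 * m + 1) * (1 + X) ^ 2 -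
        C (∑ i ∈ range m, (2 * c (2 * i + 2) - 2 * c (2 * i + 1)) +
            (2 * c 0 + c (2 * m + 2) - 2 * c (2 * m + 1))) * X ^ (2 * m + 1) * (1 - X) ^ 2 +
        (∑ i ∈ range m, C (4 * c (2 * (i + 1))) * X ^ (2 * (i + 1)) *
            (1 - X ^ (2 * (m + 1) - 2 * (i + 1))) ^ 2) +
        (∑ i ∈ range m, C (4 * c (2 * (i + 1) - 1)) * X ^ (2 * (i + 1) - 1) *
            (1 - X ^ (2 * (m + 1) - 2 * (i + 1))) * (1 - X ^ (2 * (m + 1) - 2 * (i + 1) + 2))))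
      = (∑ i ∈ range m,
            (C (2 * c (2 * i + 2)) * X ^ (2 * m + 1) * (1 + X) ^ 2 +
              C (2 * c (2 * i + 1)) * X ^ (2 * m + 1) * (1 + X) ^ 2 -
              (C (2 * c (2 * i + 2)) * X ^ (2 * m + 1) * (1 - X) ^ 2 -
                C (2 * c (2 * i + 1)) * X ^ (2 * m + 1) * (1 - X) ^ 2) +
              C (4 * c (2 * (i + 1))) * X ^ (2 * (i + 1)) *
                (1 - X ^ (2 * (m + 1) - 2 * (i + 1))) ^ 2 +
              C (4 * c (2 * (i + 1) - 1)) * X ^ (2 * (i + 1) - 1) *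
                (1 - X ^ (2 * (m + 1) - 2 * (i + 1))) * (1 - X ^ (2 * (m + 1) - 2 * (i + 1) + 2))))
        + (C (4 * c 0) * (1 - X ^ (2 * (m + 1))) ^ 2 +
            C (2 * c 0 + c (2 * m + 2) + 2 * c (2 * m + 1)) * X ^ (2 * m + 1) * (1 + X) ^ 2 -
            C (2 * c 0 + c (2 * m + 2) - 2 * c (2 * m + 1)) * X ^ (2 * m + 1) * (1 - X) ^ 2) := by
    simp only [map_add, map_sub, map_sum, add_mul, sub_mul, Finset.sum_mul,
      Finset.sum_add_distrib, Finset.sum_sub_distrib]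
    abel
  rw [hR, mul_add, Finset.mul_sum]
  have hterm2 : ∀ i ∈ range m,
      4 * (C (c (2 * i + 2)) * (X ^ (2 * i + 2) + X ^ (4 * m + 2 - 2 * i)) +
            C (c (2 * i + 1)) * (X ^ (2 * i + 1) + X ^ (4 * m + 3 - 2 * i)))
        = C (2 * c (2 * i + 2)) * X ^ (2 * m + 1) * (1 + X) ^ 2 +
            C (2 * c (2 * i + 1)) * X ^ (2 * m + 1) * (1 + X) ^ 2 -
            (C (2 * c (2 * i + 2)) * X ^ (2 * m + 1) * (1 - X) ^ 2 -
              C (2 * c (2 * i + 1)) * X ^ (2 * m + 1) * (1 - X) ^ 2) +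
            C (4 * c (2 * (i + 1))) * X ^ (2 * (i + 1)) *
              (1 - X ^ (2 * (m + 1) - 2 * (i + 1))) ^ 2 +
            C (4 * c (2 * (i + 1) - 1)) * X ^ (2 * (i + 1) - 1) *
              (1 - X ^ (2 * (m + 1) - 2 * (i + 1))) * (1 - X ^ (2 * (m + 1) - 2 * (i + 1) + 2)) := by
    intro i hi
    rw [mem_range] at hi
    obtain ⟨d, rfl⟩ : ∃ d, m = i + d + 1 := ⟨m - i - 1, by omega⟩
    rw [show 4 * (i + d + 1) + 2 - 2 * i = 2 * i + 4 * d + 6 by omega,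
      show 4 * (i + d + 1) + 3 - 2 * i = 2 * i + 4 * d + 7 by omega,
      show 2 * (i + 1) - 1 = 2 * i + 1 by omega,
      show 2 * (i + d + 1 + 1) - 2 * (i + 1) = 2 * d + 2 by omega,
      show 2 * (i + 1) = 2 * i + 2 by omega]
    simp only [map_mul, map_ofNat]
    ring
  rw [Finset.sum_congr rfl hterm2]
  congr 1
  simp only [map_add, map_sub, map_mul, map_ofNat]
  ring
end

section
/- Let k ≥ 1 and let c : ℕ → ℤ satisfy c i = c (4k+2 - i) for 0 ≤ i ≤ 4k+2 and c i = 0 for i > 4k+2. Let χ_y = ∑_{i=0}^{4k+2}(c i)y^i, τ = c 0, σ = ∑_{i=0}^{4k+2} c i, and e = ∑_{i=0}^{4k+2}(-1)^i c i. Then 4·χ_y = 4τ·(1 - y^{2k})·(1 - y^{2k+2}) + σ·y^{2k}·(1+y)^2 + e·y^{2k}·(1-y)^2 + ∑_{j=1}^{k-1} 4·(c (2j))·y^{2j}·(1 - y^{2k-2j})·(1 - y^{2k-2j+2}) + ∑_{j=1}^{k} 4·(c (2j-1))·y^{2j-1}·(1 - y^{2k-2j+2})^2 as polynomials in ℤ[y].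 -/
/-! Serre duality pairs `y^i` with `y^(4k+2-i)`. For `i ≤ 2k+1` one has
`2 (y^i + y^(4k+2-i)) = 2 B_i + y^(2k) ((1+y)^2 + (-1)^i (1-y)^2)`, where `B_i` is the polynomial
multiplying `χ^i` in the formula. Multiplied by `χ^i` and summed over the pairs and the middle
index `2k+1`, the last summand adds up to the `σ`- and `e`-terms, since `σ = ∑ χ^i` and
`e = ∑ (-1)^i χ^i` count every pair twice and the middle index once. -/

open Polynomial Finset

namespace Finset

variable {M : Type*} [AddCommMonoid M]

theorem sum_range_two_mul_add_one_eq_sum_add_reflect (f : ℕ → M) (m : ℕ) :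
    ∑ i ∈ range (2 * m + 1), f i = ∑ i ∈ range m, (f i + f (2 * m - i)) + f m := by
  rw [show 2 * m + 1 = m + 1 + m by ring, sum_range_add, sum_range_succ,
    ← sum_range_reflect (fun i => f (m + 1 + i)), sum_add_distrib, add_right_comm]
  congr 2
  refine sum_congr rfl fun i hi => ?_
  have := mem_range.1 hi
  congr 1
  omega

theorem sum_range_two_mul_add_one_eq_two_nsmul_add (f : ℕ → M) (m : ℕ)
    (hf : ∀ i < m, f (2 * m - i) = f i) :
    ∑ i ∈ range (2 * m + 1), f i = 2 • ∑ i ∈ range m, f i + f m := by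
  rw [sum_range_two_mul_add_one_eq_sum_add_reflect, two_nsmul, ← sum_add_distrib]
  congr 1
  exact sum_congr rfl fun i hi => by rw [hf i (mem_range.1 hi)]

theorem sum_range_two_mul_add_one_eq_even_add_odd (f : ℕ → M) (m : ℕ) :
    ∑ i ∈ range (2 * m + 1), f i =
      ∑ j ∈ range (m + 1), f (2 * j) + ∑ j ∈ range m, f (2 * j + 1) := by
  induction m with
  | zero => simp
  | succ m ih =>
    rw [show 2 * (m + 1) + 1 = 2 * m + 1 + 1 + 1 by ring, sum_range_succ, sum_range_succ, ih,
      sum_range_succ (fun j => f (2 * j)) (m + 1), sum_range_succ (fun j => f (2 * j + 1)) m,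
      show 2 * m + 1 + 1 = 2 * (m + 1) by ring]
    abel

theorem sum_Icc_one_eq_sum_range (f : ℕ → M) (n : ℕ) :
    ∑ j ∈ Icc 1 n, f j = ∑ j ∈ range n, f (j + 1) := by
  rw [← Ico_add_one_right_eq_Icc, sum_Ico_eq_sum_range, add_tsub_cancel_right]
  simp only [add_comm 1]

end Finset

section ChiYGenus

variable (R : Type*) [CommRing R]

/-- The polynomial `B_i` multiplying `χ^i` (for `i = 0`, `τ`) in the formula; it vanishes for
`i = 2k` and `i = 2k + 1`. -/
noncomputable def chiYBlock (k i : ℕ) : R[X] :=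
  if Even i then X ^ i * (1 - X ^ (2 * k - i)) * (1 - X ^ (2 * k - i + 2))
  else X ^ i * (1 - X ^ (2 * k + 1 - i)) ^ 2

variable {R}

theorem two_mul_X_pow_add_X_pow_eq_chiYBlock {k i : ℕ} (hi : i ≤ 2 * k + 1) :
    2 * (X ^ i + X ^ (4 * k + 2 - i) : R[X]) =
      2 * chiYBlock R k i + X ^ (2 * k) * ((1 + X) ^ 2 + (-1) ^ i * (1 - X) ^ 2) := by
  rcases Nat.even_or_odd' i with ⟨j, rfl | rfl⟩
  · obtain ⟨d, rfl⟩ : ∃ d, k = j + d := ⟨k - j, by omega⟩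
    rw [chiYBlock, if_pos (even_two_mul j),
      show 4 * (j + d) + 2 - 2 * j = 2 * j + 4 * d + 2 by omega,
      show 2 * (j + d) - 2 * j = 2 * d by omega, (even_two_mul j).neg_one_pow]
    ring
  · obtain ⟨d, rfl⟩ : ∃ d, k = j + d := ⟨k - j, by omega⟩
    rw [chiYBlock, if_neg (Nat.not_even_iff_odd.2 (odd_two_mul_add_one j)),
      show 4 * (j + d) + 2 - (2 * j + 1) = 2 * j + 4 * d + 1 by omega,
      show 2 * (j + d) + 1 - (2 * j + 1) = 2 * d by omega, (odd_two_mul_add_one j).neg_one_pow]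
    ring

theorem two_mul_sum_C_mul_X_pow_add_X_pow_eq_chiYBlock (k : ℕ) (c : ℕ → R) :
    2 * ∑ i ∈ range (2 * k + 1), C (c i) * (X ^ i + X ^ (4 * k + 2 - i)) =
      2 * ∑ i ∈ range (2 * k + 1), C (c i) * chiYBlock R k i +
        X ^ (2 * k) * ((1 + X) ^ 2 * C (∑ i ∈ range (2 * k + 1), c i) +
          (1 - X) ^ 2 * C (∑ i ∈ range (2 * k + 1), (-1) ^ i * c i)) := by
  simp only [map_sum, C_mul, C_pow, C_neg, C_1, mul_sum, ← sum_add_distrib]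
  refine sum_congr rfl fun i hi => ?_
  linear_combination C (c i) * two_mul_X_pow_add_X_pow_eq_chiYBlock (R := R) (k := k)
    (Nat.le_of_lt (mem_range.1 hi))

theorem four_mul_sum_C_mul_chiYBlock (k : ℕ) (c : ℕ → R) :
    4 * ∑ i ∈ range (2 * k + 1), C (c i) * chiYBlock R k i =
      C (4 * c 0) * (1 - X ^ (2 * k)) * (1 - X ^ (2 * k + 2)) +
      (∑ j ∈ Icc 1 (k - 1),
        C (4 * c (2 * j)) * X ^ (2 * j) * (1 - X ^ (2 * k - 2 * j)) *
          (1 - X ^ (2 * k - 2 * j + 2))) +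
      (∑ j ∈ Icc 1 k,
        C (4 * c (2 * j - 1)) * X ^ (2 * j - 1) * (1 - X ^ (2 * k - 2 * j + 2)) ^ 2) := by
  have heven (j : ℕ) : C (4 * c (2 * j)) * X ^ (2 * j) * (1 - X ^ (2 * k - 2 * j)) *
      (1 - X ^ (2 * k - 2 * j + 2)) = 4 * (C (c (2 * j)) * chiYBlock R k (2 * j)) := by
    rw [chiYBlock, if_pos (even_two_mul j), C_mul, C_ofNat]
    ring
  have hodd {j : ℕ} (hj : j < k) : C (4 * c (2 * (j + 1) - 1)) * X ^ (2 * (j + 1) - 1) *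
      (1 - X ^ (2 * k - 2 * (j + 1) + 2)) ^ 2 =
        4 * (C (c (2 * j + 1)) * chiYBlock R k (2 * j + 1)) := by
    rw [chiYBlock, if_neg (Nat.not_even_iff_odd.2 (odd_two_mul_add_one j)), C_mul, C_ofNat,
      show 2 * (j + 1) - 1 = 2 * j + 1 by omega,
      show 2 * k - 2 * (j + 1) + 2 = 2 * k + 1 - (2 * j + 1) by omega]
    ring
  have hlast : chiYBlock R k (2 * k) = 0 := by simp [chiYBlock]
  rcases k with _ | k
  · simp [chiYBlock]
  rw [sum_range_two_mul_add_one_eq_even_add_odd, sum_range_succ (fun j => _ * _) (k + 1), hlast,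
    sum_range_succ', add_tsub_cancel_right, sum_Icc_one_eq_sum_range, sum_Icc_one_eq_sum_range,
    sum_congr rfl fun j _ => heven (j + 1), sum_congr rfl fun j hj => hodd (mem_range.1 hj),
    ← mul_sum, ← mul_sum]
  have h0 := heven 0
  simp only [mul_zero, pow_zero, mul_one, tsub_zero] at h0 ⊢
  linear_combination h0.symm

end ChiYGenus

theorem chi_y_formula_dim_4k_plus_2_general (k : ℕ) (c : ℕ → ℤ)
    (hdual : ∀ i ≤ 4 * k + 2, c i = c (4 * k + 2 - i)) :
    4 * (∑ i ∈ range (4 * k + 3), C (c i) * X ^ i) =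
      C (4 * c 0) * (1 - X ^ (2 * k)) * (1 - X ^ (2 * k + 2)) +
      C (∑ i ∈ range (4 * k + 3), c i) * X ^ (2 * k) * (1 + X) ^ 2 +
      C (∑ i ∈ range (4 * k + 3), (-1) ^ i * c i) * X ^ (2 * k) * (1 - X) ^ 2 +
      (∑ j ∈ Finset.Icc 1 (k - 1),
        C (4 * c (2 * j)) * X ^ (2 * j) * (1 - X ^ (2 * k - 2 * j)) *
          (1 - X ^ (2 * k - 2 * j + 2))) +
      (∑ j ∈ Finset.Icc 1 k,
        C (4 * c (2 * j - 1)) * X ^ (2 * j - 1) * (1 - X ^ (2 * k - 2 * j + 2)) ^ 2) := by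
  have hrange : 4 * k + 3 = 2 * (2 * k + 1) + 1 := by ring
  have hreflect : 2 * (2 * k + 1) = 4 * k + 2 := by ring
  have hχ : ∑ i ∈ range (4 * k + 3), C (c i) * X ^ i =
      ∑ i ∈ range (2 * k + 1), C (c i) * (X ^ i + X ^ (4 * k + 2 - i)) +
        C (c (2 * k + 1)) * X ^ (2 * k + 1) := by
    rw [hrange, sum_range_two_mul_add_one_eq_sum_add_reflect, hreflect]
    congr 1
    refine sum_congr rfl fun i hi => ?_
    rw [← hdual i (by simp only [mem_range] at hi; omega), mul_add]
  have hσ : ∑ i ∈ range (4 * k + 3), c i =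
      2 • ∑ i ∈ range (2 * k + 1), c i + c (2 * k + 1) := by
    rw [hrange, sum_range_two_mul_add_one_eq_two_nsmul_add]
    intro i hi
    rw [hreflect, ← hdual i (by omega)]
  have he : ∑ i ∈ range (4 * k + 3), (-1) ^ i * c i =
      2 • ∑ i ∈ range (2 * k + 1), (-1) ^ i * c i - c (2 * k + 1) := by
    rw [hrange, sum_range_two_mul_add_one_eq_two_nsmul_add, (odd_two_mul_add_one k).neg_one_pow,
      neg_one_mul, sub_eq_add_neg]
    intro i hi
    rw [hreflect, ← hdual i (by omega), show 4 * k + 2 - i = i + 2 * (2 * k + 1 - i) by omega,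
      pow_add, pow_mul, neg_one_sq, one_pow, mul_one]
  rw [hχ, hσ, he]
  simp only [map_add, map_sub, map_nsmul]
  linear_combination
    2 * two_mul_sum_C_mul_X_pow_add_X_pow_eq_chiYBlock k c + four_mul_sum_C_mul_chiYBlock k c

theorem chi_y_formula_dim_4k_plus_2 (k : ℕ) (hk : 1 ≤ k) (c : ℕ → ℤ)
    (hdual : ∀ i ≤ 4 * k + 2, c i = c (4 * k + 2 - i)) (hzero : ∀ i > 4 * k + 2, c i = 0) :
    4 * (∑ i ∈ range (4 * k + 3), C (c i) * X ^ i) =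
      C (4 * c 0) * (1 - X ^ (2 * k)) * (1 - X ^ (2 * k + 2)) +
      C (∑ i ∈ range (4 * k + 3), c i) * X ^ (2 * k) * (1 + X) ^ 2 +
      C (∑ i ∈ range (4 * k + 3), (-1) ^ i * c i) * X ^ (2 * k) * (1 - X) ^ 2 +
      (∑ j ∈ Finset.Icc 1 (k - 1),
        C (4 * c (2 * j)) * X ^ (2 * j) * (1 - X ^ (2 * k - 2 * j)) *
          (1 - X ^ (2 * k - 2 * j + 2))) +
      (∑ j ∈ Finset.Icc 1 k,
        C (4 * c (2 * j - 1)) * X ^ (2 * j - 1) * (1 - X ^ (2 * k - 2 * j + 2)) ^ 2) :=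
  chi_y_formula_dim_4k_plus_2_general k c hdual
end

section
/- Let a, b : ℕ → ℤ both satisfy the duality relation x i = x (2m - i) for 0 ≤ i ≤ 2m (with x i = 0 for i > 2m), where 2m is even. Suppose ∑_{i}(-1)^i a i = ∑_{i}(-1)^i b i (equal Euler characteristics). Then ∑_i a i ≡ ∑_i b i (mod 4), i.e., the signatures are congruent modulo 4. -/
open Finset

lemma sum_split (m : ℕ) (f : ℕ → ℤ) :
    ∑ i ∈ range (2 * m + 1), f i
      = ∑ i ∈ range m, f i + f m + ∑ i ∈ range m, f (2 * m - i) := by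
  have h : 2 * m + 1 = (m + 1) + m := by omega
  rw [h, Finset.sum_range_add, Finset.sum_range_succ]
  congr 1
  rw [← Finset.sum_range_reflect (fun i => f (m + 1 + i)) m]
  apply Finset.sum_congr rfl
  intro i hi
  simp only [mem_range] at hi
  congr 1
  omega

-- signature splits: S = 2T + x m
lemma dual_sum (m : ℕ) (x : ℕ → ℤ) (hdual : ∀ i ≤ 2 * m, x i = x (2 * m - i)) :
    ∑ i ∈ range (2 * m + 1), x i = 2 * (∑ i ∈ range m, x i) + x m := by
  rw [sum_split]
  have : ∑ i ∈ range m, x (2 * m - i) = ∑ i ∈ range m, x i := by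
    apply Finset.sum_congr rfl
    intro i hi
    simp only [mem_range] at hi
    exact (hdual i (by omega)).symm
  rw [this]; ring

-- odd-part sum splits: O = 2U + (if Odd m then x m else 0)
lemma dual_odd_sum (m : ℕ) (x : ℕ → ℤ) (hdual : ∀ i ≤ 2 * m, x i = x (2 * m - i)) :
    ∑ i ∈ range (2 * m + 1), (if Odd i then x i else 0)
      = 2 * (∑ i ∈ range m, (if Odd i then x i else 0)) + (if Odd m then x m else 0) := by
  rw [sum_split]
  have : ∑ i ∈ range m, (if Odd (2 * m - i) then x (2 * m - i) else 0)
      = ∑ i ∈ range m, (if Odd i then x i else 0) := by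
    apply Finset.sum_congr rfl
    intro i hi
    simp only [mem_range] at hi
    have h1 : Odd (2 * m - i) ↔ Odd i := by
      simp only [Nat.odd_iff]; omega
    rw [← hdual i (by omega)]
    simp only [h1]
  rw [this]; ring

-- S - χ = 2 * O
lemma sig_sub_euler (n : ℕ) (x : ℕ → ℤ) :
    ∑ i ∈ range n, x i - ∑ i ∈ range n, (-1) ^ i * x i
      = 2 * ∑ i ∈ range n, (if Odd i then x i else 0) := by
  rw [Finset.mul_sum, ← Finset.sum_sub_distrib]
  apply Finset.sum_congr rfl
  intro i _
  rcases Nat.even_or_odd i with h | h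
  · rw [h.neg_one_pow]
    simp [Nat.not_odd_iff_even.mpr h]
  · rw [h.neg_one_pow]
    simp [h]
    ring

theorem sig_multiplicative_mod4 (m : ℕ) (a b : ℕ → ℤ)
    (hduala : ∀ i ≤ 2 * m, a i = a (2 * m - i)) (hzeroa : ∀ i > 2 * m, a i = 0)
    (hdualb : ∀ i ≤ 2 * m, b i = b (2 * m - i)) (hzerob : ∀ i > 2 * m, b i = 0)
    (heuler : ∑ i ∈ range (2 * m + 1), (-1) ^ i * a i =
        ∑ i ∈ range (2 * m + 1), (-1) ^ i * b i) :
    (∑ i ∈ range (2 * m + 1), a i) ≡ (∑ i ∈ range (2 * m + 1), b i) [ZMOD 4] := by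
  have hA := dual_sum m a hduala
  have hB := dual_sum m b hdualb
  have hOa := dual_odd_sum m a hduala
  have hOb := dual_odd_sum m b hdualb
  have hCa := sig_sub_euler (2 * m + 1) a
  have hCb := sig_sub_euler (2 * m + 1) b
  rw [Int.ModEq]
  set Sa := ∑ i ∈ range (2 * m + 1), a i
  set Sb := ∑ i ∈ range (2 * m + 1), b i
  set Ta := ∑ i ∈ range m, a i
  set Tb := ∑ i ∈ range m, b i
  set Ua := ∑ i ∈ range m, (if Odd i then a i else 0)
  set Ub := ∑ i ∈ range m, (if Odd i then b i else 0)
  rw [heuler] at hCa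
  have key : (4 : ℤ) ∣ Sa - Sb := by
    by_cases hm : Odd m
    · simp only [if_pos hm] at hOa hOb
      omega
    · simp only [if_neg hm] at hOa hOb
      omega
  omega
end

section
/- Let a, b : ℕ → ℤ satisfy a i = a (4-i), b i = b (4-i) for 0 ≤ i ≤ 4 (zero beyond degree 4), and ∑(-1)^i a i = ∑(-1)^i b i. Let A(y), B(y) be the corresponding polynomials, τ_A = a 0, τ_B = b 0, σ_A = ∑ a i, σ_B = ∑ b i. Then 4·(A(y) - B(y)) = 4·(τ_A - τ_B)·(1-y^2)^2 + (σ_A - σ_B)·y·(1+y)^2 as polynomials in ℤ[y]. Moreover A = B if and only if (τ_A = τ_B and σ_A = σ_B). -/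
open Polynomial Finset

theorem chi_y_diff_dim4 (a b : ℕ → ℤ)
    (hduala : ∀ i ≤ 4, a i = a (4 - i)) (hzeroa : ∀ i > 4, a i = 0)
    (hdualb : ∀ i ≤ 4, b i = b (4 - i)) (hzerob : ∀ i > 4, b i = 0)
    (heuler : ∑ i ∈ range 5, (-1) ^ i * a i = ∑ i ∈ range 5, (-1) ^ i * b i) :
    4 * ((∑ i ∈ range 5, C (a i) * X ^ i) - ∑ i ∈ range 5, C (b i) * X ^ i) =
        C (4 * (a 0 - b 0)) * (1 - X ^ 2) ^ 2 +
          C ((∑ i ∈ range 5, a i) - ∑ i ∈ range 5, b i) * X * (1 + X) ^ 2 ∧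
      ((∑ i ∈ range 5, C (a i) * X ^ i) = (∑ i ∈ range 5, C (b i) * X ^ i) ↔
        a 0 = b 0 ∧ (∑ i ∈ range 5, a i) = ∑ i ∈ range 5, b i) := by
  have ha4 : a 4 = a 0 := ((hduala 0 (by norm_num))).symm
  have ha3 : a 3 = a 1 := ((hduala 1 (by norm_num))).symm
  have hb4 : b 4 = b 0 := ((hdualb 0 (by norm_num))).symm
  have hb3 : b 3 = b 1 := ((hdualb 1 (by norm_num))).symm
  simp only [Finset.sum_range_succ, Finset.sum_range_zero] at heuler ⊢
  rw [ha4, ha3, hb4, hb3] at heuler ⊢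
  have h2 : a 2 = b 2 + 2 * (a 1 - b 1) - 2 * (a 0 - b 0) := by push_cast at heuler; linarith
  constructor
  · have key : (C (a 2) : ℤ[X]) = C (b 2 + 2 * (a 1 - b 1) - 2 * (a 0 - b 0)) := congrArg C h2
    simp only [map_add, map_sub, map_mul, map_ofNat, map_zero] at key ⊢
    linear_combination -(X - 2 * X ^ 2 + X ^ 3 : ℤ[X]) * key
  · constructor
    · intro h
      have h0 := congrArg (fun p => Polynomial.coeff p 0) h
      have h1 := congrArg (fun p => Polynomial.coeff p 1) h
      have h2' := congrArg (fun p => Polynomial.coeff p 2) h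
      have hc : ∀ (n : ℤ) (k : ℕ), ((n : ℤ[X])).coeff (k + 1) = 0 := by
        intro n k
        rw [← Polynomial.C_eq_intCast, coeff_C]
        simp
      simp [coeff_add, coeff_C_mul, coeff_X_pow, hc, Polynomial.intCast_coeff_zero] at h0 h1 h2'
      exact ⟨h0, by linarith⟩
    · rintro ⟨h0, hs⟩
      have h1 : a 1 = b 1 := by linarith
      rw [h2, h0, h1]
      norm_num
end

section
/- Let a, b : ℕ → ℤ both satisfy a i = a (4k+2 - i) and b i = b (4k'+2 - i) on their supports [0, 4k+2] and [0, 4k'+2] respectively (possibly k ≠ k'), and suppose ∑(-1)^i a i = ∑(-1)^i b i. Then ∑ a i ≡ ∑ b i (mod 4). -/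
open Finset

theorem sum_range_two_mul_of_symm {M : Type*} [AddCommMonoid M] (n : ℕ) (g : ℕ → M)
    (hg : ∀ j < n, g (2 * n - 1 - j) = g j) :
    ∑ j ∈ range (2 * n), g j = 2 • ∑ j ∈ range n, g j := by
  have hupper : ∑ j ∈ range n, g (n + j) = ∑ j ∈ range n, g j := by
    rw [← sum_range_reflect g n]
    refine sum_congr rfl fun j hj => ?_
    have hj := mem_range.mp hj
    rw [← hg (n - 1 - j) (by omega)]
    congr 1
    omega
  rw [two_mul, sum_range_add, hupper, two_nsmul]

theorem sum_add_alternating_sum_eq_two_mul_sum_even {R : Type*} [Ring R] (n : ℕ) (f : ℕ → R) :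
    ∑ i ∈ range (2 * n + 1), f i + ∑ i ∈ range (2 * n + 1), (-1) ^ i * f i =
      2 * ∑ j ∈ range (n + 1), f (2 * j) := by
  induction n with
  | zero => simp [two_mul]
  | succ n ih =>
    rw [show 2 * (n + 1) + 1 = 2 * n + 1 + 1 + 1 by ring]
    simp only [sum_range_succ _ (2 * n + 1 + 1), sum_range_succ _ (2 * n + 1),
      sum_range_succ _ (n + 1)]
    have hodd : (-1 : R) ^ (2 * n + 1) = -1 := (odd_two_mul_add_one n).neg_one_pow
    have heven : (-1 : R) ^ (2 * n + 1 + 1) = 1 := by rw [pow_succ, hodd, neg_one_mul, neg_neg]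
    rw [hodd, heven, mul_add, ← ih, show 2 * (n + 1) = 2 * n + 1 + 1 by ring]
    noncomm_ring

/-- The even-index terms pair off as `2j ↔ 4k+2-2j`, with no fixed point since `2k+1` is odd. -/
theorem sum_add_alternating_sum_of_symm {R : Type*} [Ring R] (k : ℕ) (a : ℕ → R)
    (hdual : ∀ i ≤ 4 * k + 2, a i = a (4 * k + 2 - i)) :
    ∑ i ∈ range (4 * k + 3), a i + ∑ i ∈ range (4 * k + 3), (-1) ^ i * a i =
      4 * ∑ j ∈ range (k + 1), a (2 * j) := by
  have heven_symm : ∀ j < k + 1, a (2 * (2 * (k + 1) - 1 - j)) = a (2 * j) := by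
    intro j hj
    rw [hdual (2 * j) (by omega)]
    congr 1
    omega
  rw [show 4 * k + 3 = 2 * (2 * k + 1) + 1 by ring, sum_add_alternating_sum_eq_two_mul_sum_even,
    show 2 * k + 1 + 1 = 2 * (k + 1) by ring,
    sum_range_two_mul_of_symm (k + 1) (fun j => a (2 * j)) heven_symm, two_nsmul]
  noncomm_ring

theorem sig_cong_mod4_dims_4k_plus_2_general (k k' : ℕ) (a b : ℕ → ℤ)
    (hduala : ∀ i ≤ 4 * k + 2, a i = a (4 * k + 2 - i))
    (hdualb : ∀ i ≤ 4 * k' + 2, b i = b (4 * k' + 2 - i))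
    (heuler : ∑ i ∈ range (4 * k + 3), (-1) ^ i * a i =
        ∑ i ∈ range (4 * k' + 3), (-1) ^ i * b i) :
    (∑ i ∈ range (4 * k + 3), a i) ≡ (∑ i ∈ range (4 * k' + 3), b i) [ZMOD 4] := by
  have ha := sum_add_alternating_sum_of_symm k a hduala
  have hb := sum_add_alternating_sum_of_symm k' b hdualb
  rw [Int.modEq_iff_dvd]
  exact ⟨∑ j ∈ range (k' + 1), b (2 * j) - ∑ j ∈ range (k + 1), a (2 * j),
    by linear_combination hb - ha + heuler⟩

theorem sig_cong_mod4_dims_4k_plus_2 (k k' : ℕ) (a b : ℕ → ℤ)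
    (hduala : ∀ i ≤ 4 * k + 2, a i = a (4 * k + 2 - i)) (hzeroa : ∀ i > 4 * k + 2, a i = 0)
    (hdualb : ∀ i ≤ 4 * k' + 2, b i = b (4 * k' + 2 - i)) (hzerob : ∀ i > 4 * k' + 2, b i = 0)
    (heuler : ∑ i ∈ range (4 * k + 3), (-1) ^ i * a i =
        ∑ i ∈ range (4 * k' + 3), (-1) ^ i * b i) :
    (∑ i ∈ range (4 * k + 3), a i) ≡ (∑ i ∈ range (4 * k' + 3), b i) [ZMOD 4] :=
  sig_cong_mod4_dims_4k_plus_2_general k k' a b hduala hdualb heuler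
end
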